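/- arXiv:2007.12363 — 5 statements merged into one kernel-verified Lean document; each statement's English description precedes it below -/
import Mathlib

section
/- Let d ≥ 1, f : (Fin d → ℝ) × ℝ → (Fin d → ℝ), h > 0, γ ∈ (0,1), γ₂ = (1−γ)/(2−γ), γ₃ = 1/(γ(2−γ)), and let uⁿ ∈ ℝ^d and tₙ ∈ ℝ. Suppose u^{nγ} ∈ ℝ^d satisfies the TR stage u^{nγ} − (γh/2)·f(u^{nγ}, tₙ+γh) = uⁿ + (γh/2)·f(uⁿ, tₙ), and u^{n+1} ∈ ℝ^d satisfies the BDF2 stage u^{n+1} − γ₂h·f(u^{n+1}, tₙ+h) = (1−γ₃)uⁿ + γ₃u^{nγ}. Define k₁ = f(uⁿ, tₙ), k₂ = f(u^{nγ}, tₙ+γh), k₃ = f(u^{n+1}, tₙ+h). Then u^{nγ} = uⁿ + (γh/2)k₁ + (γh/2)k₂ and u^{n+1} = uⁿ + h·( (1/(2(2−γ)))·k₁ + (1/(2(2−γ)))·k₂ + ((1−γ)/(2−γ))·k₃ ); that is, the two-stage TR-BDF2 method coincides with a three-stage diagonally implicit Runge–Kutta method. -/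
/-! The TR stage is already the first DIRK stage solved for `u^{nγ}`. The BDF2 right-hand side
is `uⁿ + γ₃ (u^{nγ} - uⁿ)`, and `u^{nγ} - uⁿ = (γh/2)(k₁ + k₂)`, so the weights of `k₁, k₂`
in the second stage are `γ₃ γ h / 2 = h / (2 (2 - γ))`. -/

theorem eq_add_smul_sub_add_smul_of_sub_smul_eq {K V : Type*} [CommRing K] [AddCommGroup V]
    [Module K V] {x y z a : V} {c g : K} (hx : x - c • a = (1 - g) • y + g • z) :
    x = y + g • (z - y) + c • a := by
  rw [sub_eq_iff_eq_add.mp hx]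
  module

theorem trbdf2_is_dirk_general
    (d : ℕ)
    (f : (Fin d → ℝ) × ℝ → (Fin d → ℝ))
    (h γ : ℝ) (hγ : γ ∈ Set.Ioo (0 : ℝ) 1)
    (γ₂ γ₃ : ℝ) (hγ₂ : γ₂ = (1 - γ) / (2 - γ)) (hγ₃ : γ₃ = 1 / (γ * (2 - γ)))
    (tn : ℝ) (un unγ un1 : Fin d → ℝ)
    (hTR : unγ - (γ * h / 2) • f (unγ, tn + γ * h) = un + (γ * h / 2) • f (un, tn))
    (hBDF : un1 - (γ₂ * h) • f (un1, tn + h) = (1 - γ₃) • un + γ₃ • unγ)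
    (k₁ k₂ k₃ : Fin d → ℝ)
    (hk₁ : k₁ = f (un, tn)) (hk₂ : k₂ = f (unγ, tn + γ * h))
    (hk₃ : k₃ = f (un1, tn + h)) :
    unγ = un + (γ * h / 2) • k₁ + (γ * h / 2) • k₂ ∧
      un1 = un + h • ((1 / (2 * (2 - γ))) • k₁ + (1 / (2 * (2 - γ))) • k₂ +
        ((1 - γ) / (2 - γ)) • k₃) := by
  subst hγ₂ hγ₃
  rw [← hk₁, ← hk₂] at hTR
  rw [← hk₃] at hBDF
  have hstage : unγ = un + (γ * h / 2) • k₁ + (γ * h / 2) • k₂ := sub_eq_iff_eq_add.mp hTR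
  refine ⟨hstage, ?_⟩
  have hweight : 1 / (γ * (2 - γ)) * (γ * h / 2) = h * (1 / (2 * (2 - γ))) := by
    field_simp [hγ.1.ne']
  rw [eq_add_smul_sub_add_smul_of_sub_smul_eq hBDF, hstage]
  linear_combination (norm := module) hweight • (k₁ + k₂)

/-- The two-stage TR-BDF2 method coincides with a three-stage DIRK method. -/
theorem trbdf2_is_dirk
    (d : ℕ) (hd : 1 ≤ d)
    (f : (Fin d → ℝ) × ℝ → (Fin d → ℝ))
    (h γ : ℝ) (hh : 0 < h) (hγ : γ ∈ Set.Ioo (0 : ℝ) 1)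
    (γ₂ γ₃ : ℝ) (hγ₂ : γ₂ = (1 - γ) / (2 - γ)) (hγ₃ : γ₃ = 1 / (γ * (2 - γ)))
    (tn : ℝ) (un unγ un1 : Fin d → ℝ)
    (hTR : unγ - (γ * h / 2) • f (unγ, tn + γ * h) = un + (γ * h / 2) • f (un, tn))
    (hBDF : un1 - (γ₂ * h) • f (un1, tn + h) = (1 - γ₃) • un + γ₃ • unγ)
    (k₁ k₂ k₃ : Fin d → ℝ)
    (hk₁ : k₁ = f (un, tn)) (hk₂ : k₂ = f (unγ, tn + γ * h))
    (hk₃ : k₃ = f (un1, tn + h)) :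
    unγ = un + (γ * h / 2) • k₁ + (γ * h / 2) • k₂ ∧
      un1 = un + h • ((1 / (2 * (2 - γ))) • k₁ + (1 / (2 * (2 - γ))) • k₂ +
        ((1 - γ) / (2 - γ)) • k₃) :=
  trbdf2_is_dirk_general d f h γ hγ γ₂ γ₃ hγ₂ hγ₃ tn un unγ un1 hTR hBDF k₁ k₂ k₃ hk₁ hk₂ hk₃
end

section
/- Let γ ∈ (0,1), γ₂ = (1−γ)/(2−γ), γ₃ = 1/(γ(2−γ)). For every z ∈ ℂ with Re z ≤ 0, one has (1−γz/2)(1−γ₂z) ≠ 0 and |R(z)| ≤ 1, where R(z) = ((1−γ₃)(1−γz/2) + γ₃(1+γz/2)) / ((1−γz/2)(1−γ₂z)). That is, the TR-BDF2 method is A-stable for every γ ∈ (0,1). -/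
open Complex

/-!
Writing `a = γ/2`, `b = γ₂` and `c = γγ₃ - γ/2`, the stability function is
`R(z) = (1 + c z) / ((1 - a z)(1 - b z))`, and for the TR-BDF2 parameters `a² + b² = c²`.
For `x = Re z ≤ 0` and `r = |z|²`, expanding gives
`|(1 - a z)(1 - b z)|² - |1 + c z|²
  = -2(a + b + c)x + (a² + b² - c²)r + 4abx² - 2ab(a + b)xr + a²b²r²`,
a sum of nonnegative terms as soon as `a, b ≥ 0` and `c² ≤ a² + b²`.
-/

/-- The stability function of the TR-BDF2 method. -/
noncomputable def trbdf2StabilityFunction (γ γ₂ γ₃ : ℝ) (z : ℂ) : ℂ :=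
  ((1 - (γ₃ : ℂ)) * (1 - (γ : ℂ) * z / 2) + (γ₃ : ℂ) * (1 + (γ : ℂ) * z / 2)) /
    ((1 - (γ : ℂ) * z / 2) * (1 - (γ₂ : ℂ) * z))

namespace Complex

lemma normSq_one_add_ofReal_mul (t : ℝ) (z : ℂ) :
    normSq (1 + t * z) = 1 + 2 * t * z.re + t ^ 2 * normSq z := by
  simp only [normSq_apply, add_re, add_im, one_re, one_im, re_ofReal_mul, im_ofReal_mul]
  ring

lemma one_sub_ofReal_mul_ne_zero {a : ℝ} (ha : 0 ≤ a) {z : ℂ} (hz : z.re ≤ 0) :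
    1 - (a : ℂ) * z ≠ 0 := by
  intro h
  have hre : (1 - (a : ℂ) * z).re = 1 - a * z.re := by simp
  rw [h, zero_re] at hre
  nlinarith [mul_nonneg ha (neg_nonneg.2 hz)]

lemma norm_one_add_mul_le_norm_one_sub_mul_mul {a b c : ℝ} (ha : 0 ≤ a) (hb : 0 ≤ b)
    (hc : c ^ 2 ≤ a ^ 2 + b ^ 2) {z : ℂ} (hz : z.re ≤ 0) :
    ‖1 + (c : ℂ) * z‖ ≤ ‖(1 - (a : ℂ) * z) * (1 - (b : ℂ) * z)‖ := by
  have habc : 0 ≤ a + b + c := by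
    nlinarith [abs_le_of_sq_le_sq' (by nlinarith) (add_nonneg ha hb)]
  have hsub (t : ℝ) : 1 - (t : ℂ) * z = 1 + ((-t : ℝ) : ℂ) * z := by push_cast; ring
  rw [← sq_le_sq₀ (norm_nonneg _) (norm_nonneg _), ← normSq_eq_norm_sq, ← normSq_eq_norm_sq,
    map_mul, hsub a, hsub b, normSq_one_add_ofReal_mul, normSq_one_add_ofReal_mul,
    normSq_one_add_ofReal_mul]
  have hr := normSq_nonneg z
  nlinarith [mul_nonneg habc (neg_nonneg.2 hz), mul_nonneg (sub_nonneg.2 hc) hr,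
    mul_nonneg (mul_nonneg ha hb) (sq_nonneg z.re),
    mul_nonneg (mul_nonneg (mul_nonneg ha hb) (add_nonneg ha hb))
      (mul_nonneg (neg_nonneg.2 hz) hr),
    mul_nonneg (sq_nonneg (a * b)) (sq_nonneg (normSq z))]

lemma norm_one_add_mul_div_le_one {a b c : ℝ} (ha : 0 ≤ a) (hb : 0 ≤ b)
    (hc : c ^ 2 ≤ a ^ 2 + b ^ 2) {z : ℂ} (hz : z.re ≤ 0) :
    (1 - (a : ℂ) * z) * (1 - (b : ℂ) * z) ≠ 0 ∧
      ‖(1 + (c : ℂ) * z) / ((1 - (a : ℂ) * z) * (1 - (b : ℂ) * z))‖ ≤ 1 := by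
  have hden := mul_ne_zero (one_sub_ofReal_mul_ne_zero ha hz) (one_sub_ofReal_mul_ne_zero hb hz)
  refine ⟨hden, ?_⟩
  rw [norm_div, div_le_one (norm_pos_iff.2 hden)]
  exact norm_one_add_mul_le_norm_one_sub_mul_mul ha hb hc hz

end Complex

lemma trbdf2StabilityFunction_eq (γ γ₂ γ₃ : ℝ) (z : ℂ) :
    trbdf2StabilityFunction γ γ₂ γ₃ z =
      (1 + ((γ * γ₃ - γ / 2 : ℝ) : ℂ) * z) /
        ((1 - ((γ / 2 : ℝ) : ℂ) * z) * (1 - (γ₂ : ℂ) * z)) := by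
  unfold trbdf2StabilityFunction
  push_cast
  ring_nf

lemma trbdf2_coeff_sq {γ : ℝ} (hγ : γ ≠ 0) (h2γ : 2 - γ ≠ 0) :
    (γ * (1 / (γ * (2 - γ))) - γ / 2) ^ 2 = (γ / 2) ^ 2 + ((1 - γ) / (2 - γ)) ^ 2 := by
  field_simp
  ring

/-- The TR-BDF2 method is A-stable for every γ ∈ (0,1). -/
theorem trbdf2_A_stable
    (γ : ℝ) (hγ : γ ∈ Set.Ioo (0 : ℝ) 1)
    (γ₂ γ₃ : ℝ) (hγ₂ : γ₂ = (1 - γ) / (2 - γ)) (hγ₃ : γ₃ = 1 / (γ * (2 - γ))) :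
    ∀ z : ℂ, z.re ≤ 0 →
      (1 - (γ : ℂ) * z / 2) * (1 - (γ₂ : ℂ) * z) ≠ 0 ∧
        ‖trbdf2StabilityFunction γ γ₂ γ₃ z‖ ≤ 1 := by
  obtain ⟨hγ0, hγ1⟩ := hγ
  intro z hz
  have ha : 0 ≤ γ / 2 := by positivity
  have hb : 0 ≤ γ₂ := hγ₂ ▸ div_nonneg (by linarith) (by linarith)
  have hc := (trbdf2_coeff_sq hγ0.ne' (by linarith)).le
  rw [← hγ₂, ← hγ₃] at hc
  have hhalf : (1 - (γ : ℂ) * z / 2) = 1 - ((γ / 2 : ℝ) : ℂ) * z := by push_cast; ring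
  rw [hhalf, trbdf2StabilityFunction_eq]
  exact norm_one_add_mul_div_le_one ha hb hc hz
end

section
/- Let γ ∈ (0,1), γ₂ = (1−γ)/(2−γ), γ₃ = 1/(γ(2−γ)), and let R(z) = ((1−γ₃)(1−γz/2) + γ₃(1+γz/2)) / ((1−γz/2)(1−γ₂z)) be the stability function of TR-BDF2. Then for every real y ≠ 0 one has |R(iy)| < 1, and |R(iy)| → 0 as |y| → ∞; that is, the TR-BDF2 method strictly damps every nonzero oscillation frequency, with damping tending to total damping for the highest frequencies. -/
/-!
On the imaginary axis `R(iy) = (1 + a iy) / (1 - c iy - b y²)` with `a = (2γ₃ - 1)γ/2`,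
`b = γγ₂/2`, `c = γ/2 + γ₂`, and the choice of `γ₂, γ₃` gives `c² = a² + 2b`. Hence the
`y²` terms of `|1 - c iy - b y²|² = 1 + (c² - 2b) y² + b² y⁴` and of `|1 + a iy|² = 1 + a² y²`
agree, so the squared modulus of the denominator exceeds that of the numerator by exactly
`b² y⁴ > 0`. The limit holds because the numerator has lower degree than the denominator.
-/

open Complex Filter

open Bornology Topology

noncomputable def linQuadRatio (a b c : ℝ) (z : ℂ) : ℂ :=
  (1 + a * z) / (1 - c * z + b * z ^ 2)

section linQuadRatio

variable {a b c : ℝ}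

theorem linQuadRatio_eq_comp_inv {z : ℂ} (hz : z ≠ 0) :
    linQuadRatio a b c z = (z⁻¹ ^ 2 + a * z⁻¹) / (z⁻¹ ^ 2 - c * z⁻¹ + b) := by
  unfold linQuadRatio
  field_simp

theorem tendsto_linQuadRatio_cobounded (hb : b ≠ 0) :
    Tendsto (linQuadRatio a b c) (cobounded ℂ) (𝓝 0) := by
  have hcont : ContinuousAt (fun w : ℂ => (w ^ 2 + a * w) / (w ^ 2 - c * w + b)) 0 :=
    ContinuousAt.div (by fun_prop) (by fun_prop) (by simpa using hb)
  have hlim : Tendsto (fun z : ℂ => (z⁻¹ ^ 2 + a * z⁻¹) / (z⁻¹ ^ 2 - c * z⁻¹ + b))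
      (cobounded ℂ) (𝓝 0) := by
    simpa [Function.comp_def] using hcont.tendsto.comp tendsto_inv₀_cobounded
  refine hlim.congr' ?_
  filter_upwards [eventually_ne_cobounded 0] with z hz
  exact (linQuadRatio_eq_comp_inv hz).symm

theorem normSq_linQuadRatio_denom_I_mul (h : c ^ 2 = a ^ 2 + 2 * b) (y : ℝ) :
    normSq (1 - c * (I * y) + b * (I * y) ^ 2) = normSq (1 + a * (I * y)) + b ^ 2 * y ^ 4 := by
  have hnum : 1 + a * (I * y) = ((1 : ℝ) : ℂ) + ((a * y : ℝ) : ℂ) * I := by push_cast; ring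
  have hden : 1 - c * (I * y) + b * (I * y) ^ 2 =
      ((1 - b * y ^ 2 : ℝ) : ℂ) + ((-(c * y) : ℝ) : ℂ) * I := by
    push_cast
    linear_combination (b * y ^ 2 : ℂ) * I_sq
  rw [hnum, hden, normSq_add_mul_I, normSq_add_mul_I]
  linear_combination y ^ 2 * h

theorem norm_linQuadRatio_I_mul_lt_one (h : c ^ 2 = a ^ 2 + 2 * b) (hb : b ≠ 0) {y : ℝ}
    (hy : y ≠ 0) : ‖linQuadRatio a b c (I * y)‖ < 1 := by
  have hsq : ‖1 + a * (I * y)‖ ^ 2 < ‖1 - c * (I * y) + b * (I * y) ^ 2‖ ^ 2 := by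
    rw [Complex.sq_norm, Complex.sq_norm, normSq_linQuadRatio_denom_I_mul h]
    have : 0 < b ^ 2 * y ^ 4 := by positivity
    linarith
  have hlt := lt_of_pow_lt_pow_left₀ 2 (norm_nonneg _) hsq
  rw [linQuadRatio, norm_div, div_lt_one (by linarith [norm_nonneg (1 + a * (I * y))])]
  exact hlt

end linQuadRatio

theorem tendsto_I_mul_ofReal_cocompact_cobounded :
    Tendsto (fun y : ℝ => I * y) (cocompact ℝ) (cobounded ℂ) := by
  rw [← tendsto_norm_atTop_iff_cobounded]
  exact tendsto_norm_cocompact_atTop.congr fun y => by simp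

theorem trbdf2StabilityFunction_eq_linQuadRatio (γ γ₂ γ₃ : ℝ) :
    trbdf2StabilityFunction γ γ₂ γ₃ =
      linQuadRatio ((2 * γ₃ - 1) * γ / 2) (γ * γ₂ / 2) (γ / 2 + γ₂) := by
  ext z
  unfold trbdf2StabilityFunction linQuadRatio
  push_cast
  ring

/-- TR-BDF2 strictly damps every nonzero oscillation frequency, and the
damping tends to total damping for the highest frequencies. -/
theorem trbdf2_damps_every_frequency
    (γ : ℝ) (hγ : γ ∈ Set.Ioo (0 : ℝ) 1)
    (γ₂ γ₃ : ℝ) (hγ₂ : γ₂ = (1 - γ) / (2 - γ)) (hγ₃ : γ₃ = 1 / (γ * (2 - γ))) :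
    (∀ y : ℝ, y ≠ 0 →
        ‖trbdf2StabilityFunction γ γ₂ γ₃ (Complex.I * (y : ℂ))‖ < 1) ∧
      Tendsto (fun y : ℝ =>
          ‖trbdf2StabilityFunction γ γ₂ γ₃ (Complex.I * (y : ℂ))‖)
        (cocompact ℝ) (nhds 0) := by
  obtain ⟨hγ0, hγ1⟩ := hγ
  have h2γ : 0 < 2 - γ := by linarith
  have hb : γ * γ₂ / 2 ≠ 0 := by
    have : 0 < 1 - γ := by linarith
    rw [hγ₂]
    positivity
  have hcoeff : (γ / 2 + γ₂) ^ 2 = ((2 * γ₃ - 1) * γ / 2) ^ 2 + 2 * (γ * γ₂ / 2) := by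
    rw [hγ₂, hγ₃]
    field_simp
    ring
  rw [trbdf2StabilityFunction_eq_linQuadRatio]
  refine ⟨fun y hy => norm_linQuadRatio_I_mul_lt_one hcoeff hb hy, ?_⟩
  simpa using
    ((tendsto_linQuadRatio_cobounded hb).comp tendsto_I_mul_ofReal_cocompact_cobounded).norm
end

section
/- Let γ ∈ (0,1), γ₂ = (1−γ)/(2−γ), γ₃ = 1/(γ(2−γ)), and let R(z) = ((1−γ₃)(1−γz/2) + γ₃(1+γz/2)) / ((1−γz/2)(1−γ₂z)) be the stability function of TR-BDF2. Then there exist constants C > 0 and δ > 0 such that for all z ∈ ℂ with |z| ≤ δ one has |R(z) − e^z| ≤ C|z|³; equivalently, the Taylor expansion of R at 0 satisfies R(z) = 1 + z + z²/2 + O(z³). That is, the TR-BDF2 method is second order accurate for every γ ∈ (0,1). -/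
open Complex

/-!
The parameters satisfy the order conditions `γ₃ γ + γ₂ = 1` and `γ + 2 γ₂ - γ γ₂ = 1`, which say
exactly that the numerator of `R` equals `1 + z + z² / 2` times its denominator up to `z³`.
As the denominator is `1` at `z = 0`, this gives `R z - (1 + z + z² / 2) = O(z³)`, and Taylor's
theorem gives the same for `exp`.
-/

open Asymptotics Filter Topology

theorem Asymptotics.IsBigO.exists_pos_bound_of_pow {𝕜 F : Type*} [NormedField 𝕜]
    [SeminormedAddCommGroup F] {f : 𝕜 → F} {n : ℕ} (h : f =O[𝓝 0] (· ^ n)) :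
    ∃ C : ℝ, 0 < C ∧ ∃ δ : ℝ, 0 < δ ∧ ∀ z : 𝕜, ‖z‖ ≤ δ → ‖f z‖ ≤ C * ‖z‖ ^ n := by
  obtain ⟨C, hC, hbound⟩ := isBigO_iff'.mp h
  obtain ⟨δ, hδ, hball⟩ := Metric.nhds_basis_closedBall.eventually_iff.mp hbound
  refine ⟨C, hC, δ, hδ, fun z hz ↦ ?_⟩
  simpa only [norm_pow] using hball (mem_closedBall_zero_iff.mpr hz)

theorem Complex.exp_sub_taylor_two_isBigO :
    (fun z : ℂ ↦ exp z - (1 + z + z ^ 2 / 2)) =O[𝓝 0] (· ^ 3) := by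
  convert exp_sub_sum_range_isBigO_pow 3 using 3 with z
  simp [Finset.sum_range_succ]

theorem trbdf2_order_conditions {γ γ₂ γ₃ : ℝ} (hγ : γ ≠ 0) (hγ' : 2 - γ ≠ 0)
    (hγ₂ : γ₂ = (1 - γ) / (2 - γ)) (hγ₃ : γ₃ = 1 / (γ * (2 - γ))) :
    γ₃ * γ + γ₂ = 1 ∧ γ + 2 * γ₂ - γ * γ₂ = 1 := by
  subst hγ₂ hγ₃
  constructor <;> field_simp <;> ring

theorem trbdf2StabilityFunction_sub_taylor_two {γ γ₂ γ₃ : ℝ} (h₁ : γ₃ * γ + γ₂ = 1)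
    (h₂ : γ + 2 * γ₂ - γ * γ₂ = 1) {z : ℂ}
    (hz : (1 - (γ : ℂ) * z / 2) * (1 - (γ₂ : ℂ) * z) ≠ 0) :
    trbdf2StabilityFunction γ γ₂ γ₃ z - (1 + z + z ^ 2 / 2) =
      z ^ 3 * ((γ / 4 + γ₂ / 2 - γ * γ₂ / 2 - γ * γ₂ / 4 * z) /
        ((1 - (γ : ℂ) * z / 2) * (1 - (γ₂ : ℂ) * z))) := by
  have h₁' : (γ₃ : ℂ) * γ + γ₂ = 1 := by exact_mod_cast h₁
  have h₂' : (γ : ℂ) + 2 * γ₂ - γ * γ₂ = 1 := by exact_mod_cast h₂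
  rw [trbdf2StabilityFunction, div_sub' hz, mul_div_assoc']
  congr 1
  linear_combination z * h₁' + z ^ 2 / 2 * h₂'

theorem trbdf2StabilityFunction_sub_taylor_two_isBigO {γ γ₂ γ₃ : ℝ} (h₁ : γ₃ * γ + γ₂ = 1)
    (h₂ : γ + 2 * γ₂ - γ * γ₂ = 1) :
    (fun z ↦ trbdf2StabilityFunction γ γ₂ γ₃ z - (1 + z + z ^ 2 / 2)) =O[𝓝 0] (· ^ 3) := by
  set D : ℂ → ℂ := fun z ↦ (1 - (γ : ℂ) * z / 2) * (1 - (γ₂ : ℂ) * z)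
  have hD_cont : Continuous D := by fun_prop
  have hD_zero : D 0 ≠ 0 := by simp [D]
  have hq : ContinuousAt
      (fun z : ℂ ↦ (γ / 4 + γ₂ / 2 - γ * γ₂ / 2 - γ * γ₂ / 4 * z) / D z) 0 :=
    ((by fun_prop : Continuous fun z : ℂ ↦ _).continuousAt).div hD_cont.continuousAt hD_zero
  have hmain := (isBigO_refl (· ^ 3 : ℂ → ℂ) (𝓝 0)).mul (hq.tendsto.isBigO_one ℂ)
  simp only [mul_one] at hmain
  refine hmain.congr' ?_ EventuallyEq.rfl
  filter_upwards [hD_cont.continuousAt.eventually_ne hD_zero] with z hz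
  exact (trbdf2StabilityFunction_sub_taylor_two h₁ h₂ hz).symm

/-- The TR-BDF2 method is second order accurate for every γ ∈ (0,1):
its stability function agrees with e^z up to O(z³). -/
theorem trbdf2_second_order
    (γ : ℝ) (hγ : γ ∈ Set.Ioo (0 : ℝ) 1)
    (γ₂ γ₃ : ℝ) (hγ₂ : γ₂ = (1 - γ) / (2 - γ)) (hγ₃ : γ₃ = 1 / (γ * (2 - γ))) :
    ∃ C : ℝ, 0 < C ∧ ∃ δ : ℝ, 0 < δ ∧
      ∀ z : ℂ, ‖z‖ ≤ δ →
        ‖trbdf2StabilityFunction γ γ₂ γ₃ z - Complex.exp z‖ ≤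
          C * ‖z‖ ^ 3 := by
  obtain ⟨h₁, h₂⟩ := trbdf2_order_conditions hγ.1.ne' (by linarith [hγ.2]) hγ₂ hγ₃
  have h := (trbdf2StabilityFunction_sub_taylor_two_isBigO h₁ h₂).sub exp_sub_taylor_two_isBigO
  exact (h.congr_left fun z ↦ by ring).exists_pos_bound_of_pow
end

section
/- Let γ ∈ (0,1), γ₂ = (1−γ)/(2−γ), γ₃ = 1/(γ(2−γ)), let λ ∈ ℂ with Re λ ≤ 0, T > 0 and u⁰ ∈ ℂ. For each integer N ≥ 1 set h = T/N and define the TR-BDF2 iterates u^{k+1} = R(hλ)·u^k for 0 ≤ k < N, where R(z) = ((1−γ₃)(1−γz/2) + γ₃(1+γz/2)) / ((1−γz/2)(1−γ₂z)). Then there exists a constant C ≥ 0 (depending on γ, λ, T and u⁰ but not on N) such that |u^N − e^{λT}u⁰| ≤ C/N² for every N ≥ 1; i.e., the TR-BDF2 method converges with second order on the linear test problem y' = λy. -/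
/-!
TR-BDF2 agrees with `exp` to second order: `R(z) = 1 + z + z²/2 + z³(a - bz)/((1 - γz/2)(1 - γ₂z))`,
so `‖R(z) - eᶻ‖ ≤ 2‖z‖³` for `‖z‖ ≤ 1/2`. Telescoping `R(z)ᴺ - e^{Nz}`, with both `R(z)` and `eᶻ`
bounded by `exp(‖z‖ + 2‖z‖³)`, turns `N` local errors of size `O(N⁻³)` into a global error
`O(N⁻²)`; the finitely many `N` with `‖λT‖/N > 1/2` only enlarge the constant.
-/

open Complex

open Filter Set

theorem norm_pow_sub_pow_le {R : Type*} [SeminormedRing R] [NormOneClass R] {x y : R} {M : ℝ}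
    (hx : ‖x‖ ≤ M) (hy : ‖y‖ ≤ M) (n : ℕ) :
    ‖x ^ n - y ^ n‖ ≤ n * M ^ (n - 1) * ‖x - y‖ := by
  have hM : 0 ≤ M := (norm_nonneg x).trans hx
  induction n with
  | zero => simp
  | succ n ih =>
    have hxn : ‖x ^ n‖ ≤ M ^ n := (norm_pow_le x n).trans (pow_le_pow_left₀ (norm_nonneg x) hx n)
    have hMn : (n : ℝ) * M ^ (n - 1) * M = n * M ^ n := by
      rcases n with _ | n
      · simp
      · simp [pow_succ, mul_assoc]
    calc ‖x ^ (n + 1) - y ^ (n + 1)‖ = ‖x ^ n * (x - y) + (x ^ n - y ^ n) * y‖ := by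
          congr 1; noncomm_ring
      _ ≤ M ^ n * ‖x - y‖ + n * M ^ (n - 1) * ‖x - y‖ * M := by
          refine (norm_add_le _ _).trans (add_le_add ?_ ?_)
          · exact (norm_mul_le _ _).trans (by gcongr)
          · exact (norm_mul_le _ _).trans (by gcongr)
      _ = (n + 1 : ℕ) * M ^ (n + 1 - 1) * ‖x - y‖ := by
          rw [mul_right_comm, hMn]; push_cast; ring

theorem Complex.norm_exp_sub_one_sub_id_sub_sq_div_two_le {x : ℂ} (hx : ‖x‖ ≤ 1) :
    ‖exp x - 1 - x - x ^ 2 / 2‖ ≤ ‖x‖ ^ 3 := by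
  have h := exp_bound hx (n := 3) (by norm_num)
  norm_num [Finset.sum_range_succ, Nat.factorial] at h
  calc ‖exp x - 1 - x - x ^ 2 / 2‖ = ‖exp x - (1 + x + x ^ 2 / 2)‖ := by ring_nf
    _ ≤ ‖x‖ ^ 3 * (2 / 9) := h
    _ ≤ ‖x‖ ^ 3 := by nlinarith [pow_nonneg (norm_nonneg x) 3]

theorem Real.exp_add_le_exp_add {s b : ℝ} (hs : 0 ≤ s) (hb : 0 ≤ b) :
    Real.exp s + b ≤ Real.exp (s + b) := by
  rw [Real.exp_add]
  nlinarith [Real.add_one_le_exp b, Real.one_le_exp hs]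

theorem exists_forall_le_div_pow_of_eventually {f : ℕ → ℝ} {C : ℝ} {p : ℕ}
    (h : ∀ᶠ N in atTop, f N ≤ C / (N : ℝ) ^ p) :
    ∃ C', 0 ≤ C' ∧ ∀ N, 1 ≤ N → f N ≤ C' / (N : ℝ) ^ p := by
  obtain ⟨N₀, hN₀⟩ := eventually_atTop.1 h
  obtain ⟨B, hB⟩ := ((finite_Iio N₀).image fun n : ℕ ↦ (n : ℝ) ^ p * f n).bddAbove
  refine ⟨max (max C B) 0, le_max_right _ _, fun N hN ↦ ?_⟩
  have hNp : (0 : ℝ) < (N : ℝ) ^ p := by positivity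
  rcases lt_or_ge N N₀ with hlt | hge
  · rw [le_div_iff₀ hNp, mul_comm]
    exact (hB (mem_image_of_mem _ hlt)).trans ((le_max_right _ _).trans (le_max_left _ _))
  · exact (hN₀ N hge).trans (by gcongr; exact (le_max_left _ _).trans (le_max_left _ _))

theorem norm_pow_sub_exp_le_of_local_error {R : ℂ → ℂ} {K r : ℝ} {p : ℕ} (hK : 0 ≤ K)
    (hR : ∀ z, ‖z‖ ≤ r → ‖R z - exp z‖ ≤ K * ‖z‖ ^ (p + 1)) (w : ℂ) {N : ℕ} (hN : 0 < N)
    (hw : ‖w‖ / N ≤ r) :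
    ‖R (w / N) ^ N - exp w‖ ≤
      K * ‖w‖ ^ (p + 1) * Real.exp (‖w‖ + K * ‖w‖ ^ (p + 1)) / (N : ℝ) ^ p := by
  have hz : ‖w / N‖ = ‖w‖ / N := by rw [norm_div, Complex.norm_natCast]
  set s := ‖w‖ / N
  have hs : 0 ≤ s := by positivity
  have hlocal := hR (w / N) (hz ▸ hw)
  rw [hz] at hlocal
  set M := Real.exp (s + K * s ^ (p + 1))
  have hexp : ‖exp (w / N)‖ ≤ M := (norm_exp_le_exp_norm _).trans <| by
    rw [hz]; exact Real.exp_le_exp.2 (le_add_of_nonneg_right (by positivity))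
  have hRM : ‖R (w / N)‖ ≤ M := calc
    ‖R (w / N)‖ ≤ ‖exp (w / N)‖ + ‖R (w / N) - exp (w / N)‖ := norm_le_insert' _ _
    _ ≤ Real.exp s + K * s ^ (p + 1) := by
        gcongr; exact (norm_exp_le_exp_norm _).trans_eq (by rw [hz])
    _ ≤ M := Real.exp_add_le_exp_add hs (by positivity)
  have hM1 : 1 ≤ M := Real.one_le_exp (by positivity)
  have hMN : M ^ N ≤ Real.exp (‖w‖ + K * ‖w‖ ^ (p + 1)) := by
    rw [← Real.exp_nat_mul]
    gcongr
    have : (N : ℝ) * (s + K * s ^ (p + 1)) = ‖w‖ + K * ‖w‖ ^ (p + 1) / (N : ℝ) ^ p := by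
      simp only [s, div_pow]; field_simp; ring
    rw [this]
    gcongr
    exact div_le_self (by positivity) (one_le_pow₀ (by exact_mod_cast hN))
  have hpow : exp (w / N) ^ N = exp w := by
    rw [← Complex.exp_nat_mul, mul_div_cancel₀ _ (Nat.cast_ne_zero.2 hN.ne')]
  calc ‖R (w / N) ^ N - exp w‖ = ‖R (w / N) ^ N - exp (w / N) ^ N‖ := by rw [hpow]
    _ ≤ N * M ^ (N - 1) * (K * s ^ (p + 1)) :=
        (norm_pow_sub_pow_le hRM hexp N).trans (by gcongr)
    _ ≤ N * M ^ N * (K * s ^ (p + 1)) := by gcongr; exact N.sub_le 1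
    _ = K * ‖w‖ ^ (p + 1) * M ^ N / (N : ℝ) ^ p := by simp only [s, div_pow]; field_simp; ring
    _ ≤ _ := by gcongr

theorem exists_norm_pow_sub_exp_le_div_pow {R : ℂ → ℂ} {K r : ℝ} {p : ℕ} (hK : 0 ≤ K)
    (hr : 0 < r) (hR : ∀ z, ‖z‖ ≤ r → ‖R z - exp z‖ ≤ K * ‖z‖ ^ (p + 1)) (w : ℂ) :
    ∃ C, 0 ≤ C ∧ ∀ N : ℕ, 1 ≤ N → ‖R (w / N) ^ N - exp w‖ ≤ C / (N : ℝ) ^ p := by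
  refine exists_forall_le_div_pow_of_eventually
    (C := K * ‖w‖ ^ (p + 1) * Real.exp (‖w‖ + K * ‖w‖ ^ (p + 1))) ?_
  filter_upwards [eventually_gt_atTop 0, eventually_ge_atTop ⌈‖w‖ / r⌉₊] with N hN hwN
  refine norm_pow_sub_exp_le_of_local_error hK hR w hN ?_
  rw [div_le_iff₀ (Nat.cast_pos.2 hN), mul_comm, ← div_le_iff₀ hr]
  exact (Nat.le_ceil _).trans (Nat.cast_le.2 hwN)

section TRBDF2

variable {γ γ₂ γ₃ : ℝ}

theorem trbdf2StabilityFunction_eq_taylor_add (hγ : γ ≠ 0) (hγ' : 2 - γ ≠ 0)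
    (hγ₂ : γ₂ = (1 - γ) / (2 - γ)) (hγ₃ : γ₃ = 1 / (γ * (2 - γ))) {z : ℂ}
    (hz : (1 - (γ : ℂ) * z / 2) * (1 - (γ₂ : ℂ) * z) ≠ 0) :
    trbdf2StabilityFunction γ γ₂ γ₃ z = 1 + z + z ^ 2 / 2 +
      z ^ 3 * (((γ ^ 2 - 2 * γ + 2) / (4 * (2 - γ)) : ℝ) - ((γ * (1 - γ) / (4 * (2 - γ)) : ℝ) * z))
        / ((1 - (γ : ℂ) * z / 2) * (1 - (γ₂ : ℂ) * z)) := by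
  have hγC : (γ : ℂ) ≠ 0 := Complex.ofReal_ne_zero.2 hγ
  have hγC' : (2 - γ : ℂ) ≠ 0 := by exact_mod_cast hγ'
  rw [trbdf2StabilityFunction, div_eq_iff hz, add_mul, div_mul_cancel₀ _ hz]
  subst hγ₂ hγ₃
  push_cast
  field_simp
  ring

theorem norm_trbdf2StabilityFunction_sub_exp_le (hγ : γ ∈ Ioo (0 : ℝ) 1)
    (hγ₂ : γ₂ = (1 - γ) / (2 - γ)) (hγ₃ : γ₃ = 1 / (γ * (2 - γ))) {z : ℂ} (hz : ‖z‖ ≤ 1 / 2) :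
    ‖trbdf2StabilityFunction γ γ₂ γ₃ z - exp z‖ ≤ 2 * ‖z‖ ^ 3 := by
  obtain ⟨hγ0, hγ1⟩ := hγ
  have h2γ : 0 < 2 - γ := by linarith
  have hγ₂0 : 0 ≤ γ₂ := hγ₂ ▸ div_nonneg (by linarith) h2γ.le
  have hγ₂1 : γ₂ ≤ 1 / 2 := by rw [hγ₂, div_le_iff₀ h2γ]; linarith
  have hfactor : ∀ a : ℝ, 0 ≤ a → a ≤ 1 / 2 → 3 / 4 ≤ ‖1 - (a : ℂ) * z‖ := fun a ha0 ha1 ↦ by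
    have : ‖(a : ℂ) * z‖ ≤ 1 / 4 := by
      rw [norm_mul, Complex.norm_real, Real.norm_of_nonneg ha0]; nlinarith [norm_nonneg z]
    linarith [norm_sub_norm_le (1 : ℂ) ((a : ℂ) * z), norm_one (α := ℂ)]
  have hden : 9 / 16 ≤ ‖(1 - (γ : ℂ) * z / 2) * (1 - (γ₂ : ℂ) * z)‖ := by
    have h1 := hfactor (γ / 2) (by linarith) (by linarith)
    have h2 := hfactor γ₂ hγ₂0 hγ₂1
    rw [norm_mul, mul_div_right_comm, ← Complex.ofReal_ofNat, ← Complex.ofReal_div]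
    nlinarith
  set a : ℝ := (γ ^ 2 - 2 * γ + 2) / (4 * (2 - γ))
  set b : ℝ := γ * (1 - γ) / (4 * (2 - γ))
  have ha : 0 ≤ a ∧ a ≤ 1 / 2 := ⟨div_nonneg (by nlinarith) (by linarith),
    by rw [div_le_iff₀ (by linarith)]; nlinarith⟩
  have hb : 0 ≤ b ∧ b ≤ 1 / 16 := ⟨div_nonneg (by nlinarith) (by linarith),
    by rw [div_le_iff₀ (by linarith)]; nlinarith [sq_nonneg (γ - 5 / 8)]⟩
  have herr : ‖(a : ℂ) - b * z‖ ≤ 9 / 16 := calc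
    ‖(a : ℂ) - b * z‖ ≤ a + b * ‖z‖ := by
      refine (norm_sub_le _ _).trans_eq ?_
      rw [norm_mul, Complex.norm_real, Complex.norm_real, Real.norm_of_nonneg ha.1,
        Real.norm_of_nonneg hb.1]
    _ ≤ 9 / 16 := by nlinarith [norm_nonneg z]
  rw [trbdf2StabilityFunction_eq_taylor_add hγ0.ne' h2γ.ne' hγ₂ hγ₃
    (norm_pos_iff.1 (by linarith))]
  calc _ = ‖z ^ 3 * (a - b * z) / ((1 - (γ : ℂ) * z / 2) * (1 - (γ₂ : ℂ) * z)) -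
        (exp z - 1 - z - z ^ 2 / 2)‖ := by congr 1; ring
    _ ≤ ‖z‖ ^ 3 + ‖z‖ ^ 3 := by
      refine (norm_sub_le _ _).trans (add_le_add ?_
        (norm_exp_sub_one_sub_id_sub_sq_div_two_le (by linarith)))
      rw [norm_div, norm_mul, norm_pow, div_le_iff₀ (by linarith)]
      gcongr
      exact herr.trans hden
    _ = 2 * ‖z‖ ^ 3 := by ring

end TRBDF2

theorem trbdf2_second_order_convergence_general
    (γ : ℝ) (hγ : γ ∈ Set.Ioo (0 : ℝ) 1)
    (γ₂ γ₃ : ℝ) (hγ₂ : γ₂ = (1 - γ) / (2 - γ)) (hγ₃ : γ₃ = 1 / (γ * (2 - γ)))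
    (lam : ℂ) (T : ℝ) (u0 : ℂ) :
    ∃ C : ℝ, 0 ≤ C ∧ ∀ N : ℕ, 1 ≤ N →
      ‖
          ((trbdf2StabilityFunction γ γ₂ γ₃ (((T / N : ℝ) : ℂ) * lam)) ^ N * u0 -
            Complex.exp (lam * (T : ℂ)) * u0)‖ ≤ C / (N : ℝ) ^ 2 := by
  obtain ⟨C, hC0, hC⟩ := exists_norm_pow_sub_exp_le_div_pow (p := 2) zero_le_two
    (by norm_num) (fun _ ↦ norm_trbdf2StabilityFunction_sub_exp_le hγ hγ₂ hγ₃) (lam * T)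
  refine ⟨C * ‖u0‖, by positivity, fun N hN ↦ ?_⟩
  have hstep : ((T / N : ℝ) : ℂ) * lam = lam * T / N := by push_cast; ring
  rw [hstep, ← sub_mul, norm_mul, mul_div_right_comm C]
  exact mul_le_mul_of_nonneg_right (hC N hN) (norm_nonneg u0)

/-- Second order convergence of the TR-BDF2 method on the linear test
problem y' = λy with Re λ ≤ 0. -/
theorem trbdf2_second_order_convergence
    (γ : ℝ) (hγ : γ ∈ Set.Ioo (0 : ℝ) 1)
    (γ₂ γ₃ : ℝ) (hγ₂ : γ₂ = (1 - γ) / (2 - γ)) (hγ₃ : γ₃ = 1 / (γ * (2 - γ)))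
    (lam : ℂ) (hlam : lam.re ≤ 0) (T : ℝ) (hT : 0 < T) (u0 : ℂ) :
    ∃ C : ℝ, 0 ≤ C ∧ ∀ N : ℕ, 1 ≤ N →
      ‖
          ((trbdf2StabilityFunction γ γ₂ γ₃ (((T / N : ℝ) : ℂ) * lam)) ^ N * u0 -
            Complex.exp (lam * (T : ℂ)) * u0)‖ ≤ C / (N : ℝ) ^ 2 :=
  trbdf2_second_order_convergence_general γ hγ γ₂ γ₃ hγ₂ hγ₃ lam T u0
end
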